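/- arXiv:2208.03113 — 3 statements merged into one kernel-verified Lean document; each statement's English description precedes it below -/
import Mathlib

section
/- Lemma (key identity for signed-permutation averaging on the hypercube; main computation in the proof of Lemma 3.2). Let d ≥ 1 and f, h : H_d → ℝ. Let s be uniform on H_d and σ uniform on S_d, independent, and x uniform on H_d. Then E_{s,σ}[ ( E_x[ f(s ⊙ σ(x)) h(x) ] )² ] = Σ_{S ⊆ [d]} f̂(S)² · C(d,|S|)^{−1} · Σ_{S' ⊆ [d], |S'| = |S|} ĥ(S')², where C(d,k) is the binomial coefficient. -/
open scoped BigOperators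

noncomputable section

/-- A Boolean bit viewed as a sign in `{+1, -1}` (`true ↦ +1`). -/
def sgn (b : Bool) : ℝ := if b then 1 else -1

/-- Expectation over the uniform measure on the hypercube `H_d = {+1,-1}^d`. -/
def hcE {d : ℕ} (f : (Fin d → Bool) → ℝ) : ℝ := (∑ x : Fin d → Bool, f x) / 2 ^ d

/-- The parity (Fourier character) `χ_S(x) = ∏_{i∈S} x_i`. -/
def chi {d : ℕ} (S : Finset (Fin d)) (x : Fin d → Bool) : ℝ := ∏ i ∈ S, sgn (x i)

/-- The Fourier coefficient `f̂(S) = E_{x∼H_d}[f(x)χ_S(x)]`. -/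
def fourierCoef {d : ℕ} (f : (Fin d → Bool) → ℝ) (S : Finset (Fin d)) : ℝ :=
  hcE fun x => f x * chi S x

lemma sgn_mul (a b : Bool) : sgn a * sgn b = sgn (a == b) := by
  cases a <;> cases b <;> norm_num [sgn]

lemma chi_eq_prod_ite {d : ℕ} (S : Finset (Fin d)) (x : Fin d → Bool) :
    chi S x = ∏ i : Fin d, (if i ∈ S then sgn (x i) else 1) := by
  rw [Finset.prod_ite_mem, Finset.univ_inter, chi]

/-- Orthogonality of characters, summed over the cube. -/
lemma sum_chi_mul_chi {d : ℕ} (S T : Finset (Fin d)) :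
    ∑ x : Fin d → Bool, chi S x * chi T x = if S = T then (2:ℝ)^d else 0 := by
  have key : ∑ x : Fin d → Bool, chi S x * chi T x
      = ∏ i : Fin d, ∑ b : Bool,
          ((if i ∈ S then sgn b else 1) * (if i ∈ T then sgn b else 1)) := by
    rw [← Finset.sum_prod_piFinset (Finset.univ : Finset Bool)
      (fun i b => (if i ∈ S then sgn b else 1) * (if i ∈ T then sgn b else 1)),
      Fintype.piFinset_univ]
    apply Finset.sum_congr rfl
    intro x _
    rw [chi_eq_prod_ite, chi_eq_prod_ite, ← Finset.prod_mul_distrib]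
  have factor : ∀ i : Fin d, (∑ b : Bool,
      ((if i ∈ S then sgn b else 1) * (if i ∈ T then sgn b else 1)))
      = if ((i ∈ S) ↔ (i ∈ T)) then (2:ℝ) else 0 := by
    intro i
    by_cases hS : i ∈ S <;> by_cases hT : i ∈ T <;>
      simp [hS, hT, sgn] <;> norm_num
  rw [key]
  by_cases hST : S = T
  · subst hST
    simp only [factor, iff_self, if_true, if_pos rfl]
    rw [Finset.prod_const]
    simp
  · rw [if_neg hST]
    have : ∃ i : Fin d, ¬ ((i ∈ S) ↔ (i ∈ T)) := by
      by_contra hcon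
      push_neg at hcon
      exact hST (Finset.ext fun i => (hcon i))
    obtain ⟨i, hi⟩ := this
    apply Finset.prod_eq_zero (Finset.mem_univ i)
    rw [factor i, if_neg hi]

/-- Dual orthogonality: summing a product of characters over all frequencies. -/
lemma sum_chi_chi_eq {d : ℕ} (x y : Fin d → Bool) :
    ∑ S : Finset (Fin d), chi S x * chi S y = if x = y then (2:ℝ)^d else 0 := by
  have h1 : ∀ S : Finset (Fin d), chi S x * chi S y
      = ∏ i ∈ S, (sgn (x i) * sgn (y i)) := by
    intro S; rw [chi, chi, ← Finset.prod_mul_distrib]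
  have h2 : ∑ S : Finset (Fin d), chi S x * chi S y
      = ∏ i : Fin d, ((sgn (x i) * sgn (y i)) + 1) := by
    rw [Finset.prod_add]
    simp only [Finset.prod_const_one, mul_one]
    rw [Finset.powerset_univ]
    exact Finset.sum_congr rfl fun S _ => h1 S
  rw [h2]
  by_cases hxy : x = y
  · subst hxy
    rw [if_pos rfl]
    have : ∀ i : Fin d, (sgn (x i) * sgn (x i)) + 1 = 2 := by
      intro i; cases x i <;> norm_num [sgn]
    rw [Finset.prod_congr rfl fun i _ => this i, Finset.prod_const]
    simp
  · rw [if_neg hxy]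
    have : ∃ i, x i ≠ y i := by
      by_contra hcon
      push_neg at hcon
      exact hxy (funext hcon)
    obtain ⟨i, hi⟩ := this
    apply Finset.prod_eq_zero (Finset.mem_univ i)
    cases hx : x i <;> cases hy : y i <;> simp_all [sgn]
  
/-- Plancherel / Parseval for the pairing of two functions. -/
lemma plancherel {d : ℕ} (f h : (Fin d → Bool) → ℝ) :
    hcE (fun x => f x * h x) = ∑ S : Finset (Fin d), fourierCoef f S * fourierCoef h S := by
  have h2d : ((2:ℝ)^d) ≠ 0 := by positivity
  symm
  calc ∑ S : Finset (Fin d), fourierCoef f S * fourierCoef h S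
      = ∑ S : Finset (Fin d), (∑ x : Fin d → Bool, ∑ y : Fin d → Bool,
          (f x * h y) * (chi S x * chi S y)) / ((2:ℝ)^d * (2:ℝ)^d) := by
        apply Finset.sum_congr rfl
        intro S _
        rw [fourierCoef, fourierCoef, hcE, hcE, div_mul_div_comm, Finset.sum_mul_sum]
        congr 1
        apply Finset.sum_congr rfl; intro x _
        apply Finset.sum_congr rfl; intro y _
        ring
    _ = (∑ x : Fin d → Bool, ∑ y : Fin d → Bool,
          (f x * h y) * ∑ S : Finset (Fin d), chi S x * chi S y) / ((2:ℝ)^d * (2:ℝ)^d) := by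
        rw [← Finset.sum_div]
        congr 1
        rw [Finset.sum_comm]
        apply Finset.sum_congr rfl; intro x _
        rw [Finset.sum_comm]
        apply Finset.sum_congr rfl; intro y _
        rw [Finset.mul_sum]
    _ = (∑ x : Fin d → Bool, f x * h x * (2:ℝ)^d) / ((2:ℝ)^d * (2:ℝ)^d) := by
        congr 1
        apply Finset.sum_congr rfl; intro x _
        simp only [sum_chi_chi_eq, mul_ite, mul_zero, Finset.sum_ite_eq,
          Finset.mem_univ, if_true]
    _ = hcE (fun x => f x * h x) := by
        rw [hcE, ← Finset.sum_mul]
        field_simp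

/-- Averaging the square of a character sum. -/
lemma sum_sq_chi {d : ℕ} (c : Finset (Fin d) → ℝ) :
    ∑ s : Fin d → Bool, (∑ T : Finset (Fin d), c T * chi T s)^2
      = (2:ℝ)^d * ∑ T : Finset (Fin d), (c T)^2 := by
  have expand : ∀ s : Fin d → Bool, (∑ T : Finset (Fin d), c T * chi T s)^2
      = ∑ T : Finset (Fin d), ∑ T' : Finset (Fin d),
          (c T * c T') * (chi T s * chi T' s) := by
    intro s
    rw [sq, Finset.sum_mul_sum]
    apply Finset.sum_congr rfl; intro T _
    apply Finset.sum_congr rfl; intro T' _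
    ring
  calc ∑ s : Fin d → Bool, (∑ T : Finset (Fin d), c T * chi T s)^2
      = ∑ T : Finset (Fin d), ∑ T' : Finset (Fin d),
          (c T * c T') * ∑ s : Fin d → Bool, chi T s * chi T' s := by
        rw [Finset.sum_congr rfl (fun s _ => expand s), Finset.sum_comm]
        apply Finset.sum_congr rfl; intro T _
        rw [Finset.sum_comm]
        apply Finset.sum_congr rfl; intro T' _
        rw [Finset.mul_sum]
    _ = ∑ T : Finset (Fin d), (c T * c T) * (2:ℝ)^d := by
        apply Finset.sum_congr rfl; intro T _
        simp only [sum_chi_mul_chi, mul_ite, mul_zero, Finset.sum_ite_eq,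
          Finset.mem_univ, if_true]
    _ = (2:ℝ)^d * ∑ T : Finset (Fin d), (c T)^2 := by
        rw [Finset.mul_sum]
        apply Finset.sum_congr rfl; intro T _
        ring

/-- The change-of-variables equivalence on the cube given by a sign vector `s`
and a permutation `σ`. -/
def cubeShift {d : ℕ} (s : Fin d → Bool) (σ : Equiv.Perm (Fin d)) :
    (Fin d → Bool) ≃ (Fin d → Bool) where
  toFun x := fun i => s i == x (σ i)
  invFun y := fun j => s (σ.symm j) == y (σ.symm j)
  left_inv x := by
    funext j
    simp only [Equiv.apply_symm_apply]
    cases s (σ.symm j) <;> cases x j <;> rfl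
  right_inv y := by
    funext i
    simp only [Equiv.symm_apply_apply]
    cases s i <;> cases y i <;> rfl

/-- Fourier coefficients of the signed-permuted function. -/
lemma fourier_shift {d : ℕ} (f : (Fin d → Bool) → ℝ) (s : Fin d → Bool)
    (σ : Equiv.Perm (Fin d)) (S : Finset (Fin d)) :
    fourierCoef (fun x => f (fun i => s i == x (σ i))) S
      = chi (S.image σ.symm) s * fourierCoef f (S.image σ.symm) := by
  have key : ∑ x : Fin d → Bool, (f fun i => s i == x (σ i)) * chi S x
      = ∑ y : Fin d → Bool, f y * chi (S.image σ.symm) y * chi (S.image σ.symm) s := by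
    refine (Fintype.sum_bijective ((cubeShift s σ).symm : (Fin d → Bool) → (Fin d → Bool))
      (cubeShift s σ).symm.bijective _ _ ?_).symm
    intro y
    show f y * chi (S.image σ.symm) y * chi (S.image σ.symm) s
        = f ((cubeShift s σ) ((cubeShift s σ).symm y)) * chi S ((cubeShift s σ).symm y)
    rw [Equiv.apply_symm_apply]
    have hchi : chi S ((cubeShift s σ).symm y)
        = chi (S.image σ.symm) s * chi (S.image σ.symm) y := by
      rw [chi]
      have hpt : ∀ i ∈ S, sgn (((cubeShift s σ).symm y) i)
          = sgn (s (σ.symm i)) * sgn (y (σ.symm i)) := by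
        intro i _
        rw [sgn_mul]
        rfl
      rw [Finset.prod_congr rfl hpt, Finset.prod_mul_distrib]
      rw [chi, chi, Finset.prod_image, Finset.prod_image]
      · intro a _ b _ hab; exact σ.symm.injective hab
      · intro a _ b _ hab; exact σ.symm.injective hab
    rw [hchi]
    ring
  rw [fourierCoef, fourierCoef, hcE, hcE, key, ← Finset.sum_mul]
  ring

/-- The key inner expectation, expanded in Fourier. -/
lemma inner_eq {d : ℕ} (f h : (Fin d → Bool) → ℝ) (s : Fin d → Bool)
    (σ : Equiv.Perm (Fin d)) :
    (hcE fun x => f (fun i => s i == x (σ i)) * h x)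
      = ∑ T : Finset (Fin d),
          (fourierCoef f T * fourierCoef h (T.image σ)) * chi T s := by
  rw [plancherel (fun x => f (fun i => s i == x (σ i))) h]
  refine (Fintype.sum_bijective (fun T : Finset (Fin d) => T.image (σ : Fin d → Fin d))
    ?_ (fun T => (fourierCoef f T * fourierCoef h (T.image σ)) * chi T s)
    (fun S => fourierCoef (fun x => f (fun i => s i == x (σ i))) S * fourierCoef h S)
    ?_).symm
  · constructor
    · intro a b hab
      simp only at hab
      have h2 := congrArg (Finset.image (σ.symm : Fin d → Fin d)) hab
      simpa [Finset.image_image, Equiv.symm_comp_self, Finset.image_id] using h2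
    · intro S
      refine ⟨S.image (σ.symm : Fin d → Fin d), ?_⟩
      simp [Finset.image_image, Equiv.self_comp_symm, Finset.image_id]
  · intro T
    show fourierCoef f T * fourierCoef h (T.image σ) * chi T s
        = fourierCoef (fun x => f fun i => s i == x (σ i)) (T.image (σ : Fin d → Fin d))
            * fourierCoef h (T.image (σ : Fin d → Fin d))
    rw [fourier_shift]
    have himg : (T.image (σ : Fin d → Fin d)).image (σ.symm : Fin d → Fin d) = T := by
      simp [Finset.image_image, Equiv.symm_comp_self, Finset.image_id]
    rw [himg]
    ring

lemma exists_perm_image {d : ℕ} (T S' : Finset (Fin d)) (hc : S'.card = T.card) :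
    ∃ τ : Equiv.Perm (Fin d), T.image (τ : Fin d → Fin d) = S' := by
  classical
  have e : {x : Fin d // x ∈ T} ≃ {x : Fin d // x ∈ S'} :=
    Finset.equivOfCardEq (hc.symm : T.card = S'.card)
  refine ⟨e.extendSubtype, ?_⟩
  apply Finset.eq_of_subset_of_card_le
  · intro j hj
    obtain ⟨i, hi, rfl⟩ := Finset.mem_image.mp hj
    exact e.extendSubtype_mem i hi
  · rw [Finset.card_image_of_injective _ (Equiv.injective _)]
    exact le_of_eq hc

lemma card_filter_card {d k : ℕ} :
    (Finset.univ.filter fun S' : Finset (Fin d) => S'.card = k).card = d.choose k := by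
  have : Finset.univ.filter (fun S' : Finset (Fin d) => S'.card = k)
      = Finset.powersetCard k (Finset.univ : Finset (Fin d)) := by
    rw [Finset.powersetCard_eq_filter, Finset.powerset_univ]
  rw [this, Finset.card_powersetCard, Finset.card_univ, Fintype.card_fin]

/-- Fibers of `σ ↦ σ(T)` all have the same cardinality. -/
lemma fiber_card_const {d : ℕ} (T S' : Finset (Fin d)) (hc : S'.card = T.card) :
    (Finset.univ.filter fun σ : Equiv.Perm (Fin d) => T.image (σ : Fin d → Fin d) = S').card
      = (Finset.univ.filter fun σ : Equiv.Perm (Fin d) => T.image (σ : Fin d → Fin d) = T).card := by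
  obtain ⟨τ, hτ⟩ := exists_perm_image T S' hc
  symm
  refine Finset.card_nbij' (fun σ => σ.trans τ) (fun ρ => ρ.trans τ.symm) ?_ ?_ ?_ ?_
  · intro σ hσ
    rw [Finset.mem_coe, Finset.mem_filter] at hσ ⊢
    refine ⟨Finset.mem_univ _, ?_⟩
    have : T.image ((σ.trans τ : Equiv.Perm (Fin d)) : Fin d → Fin d)
        = (T.image (σ : Fin d → Fin d)).image (τ : Fin d → Fin d) := by
      rw [Finset.image_image]; rfl
    rw [this, hσ.2, hτ]
  · intro ρ hρ
    rw [Finset.mem_coe, Finset.mem_filter] at hρ ⊢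
    refine ⟨Finset.mem_univ _, ?_⟩
    have : T.image ((ρ.trans τ.symm : Equiv.Perm (Fin d)) : Fin d → Fin d)
        = (T.image (ρ : Fin d → Fin d)).image (τ.symm : Fin d → Fin d) := by
      rw [Finset.image_image]; rfl
    rw [this, hρ.2, ← hτ, Finset.image_image]
    simp [Equiv.symm_comp_self, Finset.image_id]
  · intro σ _; ext x; simp
  · intro ρ _; ext x; simp

/-- Averaging over permutations of the image of a fixed set. -/
lemma perm_count {d : ℕ} (T : Finset (Fin d)) (F : Finset (Fin d) → ℝ) :
    ∑ σ : Equiv.Perm (Fin d), F (T.image (σ : Fin d → Fin d))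
      = (Fintype.card (Equiv.Perm (Fin d)) : ℝ) * ((d.choose T.card : ℝ))⁻¹ *
        ∑ S' ∈ Finset.univ.filter (fun S' : Finset (Fin d) => S'.card = T.card), F S' := by
  classical
  set k := T.card with hk
  set t := Finset.univ.filter (fun S' : Finset (Fin d) => S'.card = k) with ht
  have hmaps : ∀ σ : Equiv.Perm (Fin d), σ ∈ (Finset.univ : Finset (Equiv.Perm (Fin d))) →
      T.image (σ : Fin d → Fin d) ∈ t := by
    intro σ _
    rw [ht, Finset.mem_filter]
    exact ⟨Finset.mem_univ _, Finset.card_image_of_injective _ (Equiv.injective _)⟩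
  set N := (Finset.univ.filter fun σ : Equiv.Perm (Fin d) =>
      T.image (σ : Fin d → Fin d) = T).card with hN
  have hfib : ∀ S' ∈ t, (Finset.univ.filter fun σ : Equiv.Perm (Fin d) =>
      T.image (σ : Fin d → Fin d) = S').card = N := by
    intro S' hS'
    rw [ht, Finset.mem_filter] at hS'
    exact fiber_card_const T S' hS'.2
  have hpart : Fintype.card (Equiv.Perm (Fin d)) = t.card * N := by
    rw [← Finset.card_univ,
      Finset.card_eq_sum_card_fiberwise hmaps,
      Finset.sum_congr rfl hfib, Finset.sum_const, smul_eq_mul]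
  have hsum : ∑ σ : Equiv.Perm (Fin d), F (T.image (σ : Fin d → Fin d))
      = ∑ S' ∈ t, (N : ℝ) * F S' := by
    rw [← Finset.sum_fiberwise_of_maps_to' hmaps F]
    apply Finset.sum_congr rfl
    intro S' hS'
    rw [Finset.sum_const, nsmul_eq_mul, hfib S' hS']
  rw [hsum, ← Finset.mul_sum]
  congr 1
  have hcard : t.card = d.choose k := card_filter_card
  have hchoosepos : 0 < d.choose k := by
    apply Nat.choose_pos
    calc k = T.card := hk.symm
      _ ≤ (Finset.univ : Finset (Fin d)).card := Finset.card_le_univ T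
      _ = d := by rw [Finset.card_univ, Fintype.card_fin]
  have : (Fintype.card (Equiv.Perm (Fin d)) : ℝ) = (d.choose k : ℝ) * N := by
    rw [hpart, hcard]; push_cast; ring
  rw [this]
  field_simp

/-- **Key identity for signed-permutation averaging on the hypercube** (main computation
in the proof of Lemma 3.2):
`E_{s,σ}[(E_x[f(s ⊙ σ(x)) h(x)])²] = Σ_S f̂(S)² C(d,|S|)⁻¹ Σ_{|S'|=|S|} ĥ(S')²`.
Here the coordinatewise product of signs is implemented on Booleans by `s i == x (σ i)`
(with `true ↦ +1`, `sgn a * sgn b = sgn (a == b)`). -/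
theorem stmt_5 {d : ℕ} (hd : 1 ≤ d) (f h : (Fin d → Bool) → ℝ) :
    (∑ s : Fin d → Bool, ∑ σ : Equiv.Perm (Fin d),
        (hcE fun x => f (fun i => s i == x (σ i)) * h x) ^ 2)
      / (2 ^ d * (Fintype.card (Equiv.Perm (Fin d)) : ℝ))
    = ∑ S : Finset (Fin d), fourierCoef f S ^ 2 * ((d.choose S.card : ℝ))⁻¹ *
        ∑ S' ∈ Finset.univ.filter (fun S' : Finset (Fin d) => S'.card = S.card),
          fourierCoef h S' ^ 2 := by
  have hnum : (∑ s : Fin d → Bool, ∑ σ : Equiv.Perm (Fin d),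
      (hcE fun x => f (fun i => s i == x (σ i)) * h x) ^ 2)
      = ((2:ℝ)^d * (Fintype.card (Equiv.Perm (Fin d)) : ℝ)) *
        ∑ S : Finset (Fin d), fourierCoef f S ^ 2 * ((d.choose S.card : ℝ))⁻¹ *
          ∑ S' ∈ Finset.univ.filter (fun S' : Finset (Fin d) => S'.card = S.card),
            fourierCoef h S' ^ 2 := by
    calc ∑ s : Fin d → Bool, ∑ σ : Equiv.Perm (Fin d),
          (hcE fun x => f (fun i => s i == x (σ i)) * h x) ^ 2
        = ∑ σ : Equiv.Perm (Fin d), ∑ s : Fin d → Bool,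
            (∑ T : Finset (Fin d),
              (fourierCoef f T * fourierCoef h (T.image (σ : Fin d → Fin d))) * chi T s)^2 := by
          rw [Finset.sum_comm]
          exact Finset.sum_congr rfl fun σ _ => Finset.sum_congr rfl fun s _ => by
            rw [inner_eq]
      _ = ∑ σ : Equiv.Perm (Fin d), (2:ℝ)^d * ∑ T : Finset (Fin d),
            (fourierCoef f T * fourierCoef h (T.image (σ : Fin d → Fin d)))^2 :=
          Finset.sum_congr rfl fun σ _ => sum_sq_chi _
      _ = (2:ℝ)^d * ∑ T : Finset (Fin d), fourierCoef f T ^ 2 *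
            ∑ σ : Equiv.Perm (Fin d), fourierCoef h (T.image (σ : Fin d → Fin d)) ^ 2 := by
          rw [← Finset.mul_sum]
          congr 1
          rw [Finset.sum_comm]
          apply Finset.sum_congr rfl; intro T _
          rw [Finset.mul_sum]
          apply Finset.sum_congr rfl; intro σ _
          ring
      _ = (2:ℝ)^d * ((Fintype.card (Equiv.Perm (Fin d)) : ℝ) * ∑ S : Finset (Fin d),
            fourierCoef f S ^ 2 * ((d.choose S.card : ℝ))⁻¹ *
            ∑ S' ∈ Finset.univ.filter (fun S' : Finset (Fin d) => S'.card = S.card),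
              fourierCoef h S' ^ 2) := by
          congr 1
          rw [Finset.mul_sum]
          apply Finset.sum_congr rfl; intro T _
          rw [perm_count T (fun S' => fourierCoef h S' ^ 2)]
          ring
      _ = _ := by ring
  rw [hnum]
  have h1 : ((2:ℝ)^d * (Fintype.card (Equiv.Perm (Fin d)) : ℝ)) ≠ 0 := by
    have : (0:ℝ) < (Fintype.card (Equiv.Perm (Fin d)) : ℝ) := by
      exact_mod_cast Fintype.card_pos
    positivity
  rw [mul_div_cancel_left₀ _ h1]

end
end

section
/- Proposition (the sum-mod-4 sign function has exponentially small sign-flip alignment; example of Appendix D.1.2). Let d ≥ 1 and define f : H_d → ℝ by f(x) = 0 if |{j : x_j = 1}| ≡ 0 (mod 2), f(x) = 1 if |{j : x_j = 1}| ≡ 1 (mod 4), and f(x) = −1 if |{j : x_j = 1}| ≡ 3 (mod 4). Then for every h : H_d → ℝ, E_{s∼H_d}[ ( E_{x∼H_d}[ f(x ⊙ s) h(x) ] )² ] ≤ 2^{−d}·‖h‖²_{L²(H_d)}. -/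
open scoped BigOperators

noncomputable section

/-- The sum-mod-4 sign function: `f(x) = 0` if `|{j : x_j = 1}| ≡ 0 (mod 2)`,
`f(x) = 1` if `|{j : x_j = 1}| ≡ 1 (mod 4)`, `f(x) = −1` if `|{j : x_j = 1}| ≡ 3 (mod 4)`
(with `true ↦ +1`, so `x_j = 1` means `x j = true`). -/
def fmod4 {d : ℕ} (x : Fin d → Bool) : ℝ :=
  if (Finset.univ.filter fun j => x j = true).card % 2 = 0 then 0
  else if (Finset.univ.filter fun j => x j = true).card % 4 = 1 then 1
  else -1

theorem sum_prod_bool {β : Type} [CommSemiring β] {d : ℕ} (g : Fin d → Bool → β) :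
    ∑ x : Fin d → Bool, ∏ i, g i (x i) = ∏ i, (g i true + g i false) := by
  rw [show (Finset.univ : Finset (Fin d → Bool)) = Fintype.piFinset (fun _ => Finset.univ) from
    (Fintype.piFinset_univ).symm, ← Finset.prod_univ_sum]
  simp [Fintype.sum_bool]

theorem chi_eq_prod {d : ℕ} (S : Finset (Fin d)) (x : Fin d → Bool) :
    chi S x = ∏ i, (if i ∈ S then sgn (x i) else 1) := by
  rw [chi, ← Finset.prod_filter]; congr 1; simp [Finset.filter_mem_eq_inter]

theorem chi_ortho {d : ℕ} (S T : Finset (Fin d)) :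
    ∑ x : Fin d → Bool, chi S x * chi T x
      = if S = T then (2 : ℝ) ^ d else 0 := by
  have : ∀ x : Fin d → Bool, chi S x * chi T x
      = ∏ i, ((if i ∈ S then sgn (x i) else 1) * (if i ∈ T then sgn (x i) else 1)) := by
    intro x
    rw [chi_eq_prod, chi_eq_prod, Finset.prod_mul_distrib]
  simp_rw [this]
  rw [sum_prod_bool (fun i b => (if i ∈ S then sgn b else 1) * (if i ∈ T then sgn b else 1))]
  have hfac : ∀ i : Fin d,
      ((if i ∈ S then sgn true else 1) * (if i ∈ T then sgn true else 1)
        + (if i ∈ S then sgn false else 1) * (if i ∈ T then sgn false else 1))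
      = if ((i ∈ S) ↔ (i ∈ T)) then 2 else 0 := by
    intro i
    by_cases hS : i ∈ S <;> by_cases hT : i ∈ T <;> simp [hS, hT, sgn] <;> norm_num
  simp_rw [hfac]
  by_cases hST : S = T
  · subst hST
    simp
  · have : ∃ i : Fin d, ¬((i ∈ S) ↔ (i ∈ T)) := by
      by_contra hc
      push_neg at hc
      exact hST (Finset.ext fun i => (hc i))
    obtain ⟨i, hi⟩ := this
    rw [if_neg hST]
    exact Finset.prod_eq_zero (Finset.mem_univ i) (by rw [if_neg hi])

theorem chi_dual_ortho {d : ℕ} (x y : Fin d → Bool) :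
    ∑ S : Finset (Fin d), chi S x * chi S y
      = if x = y then (2 : ℝ) ^ d else 0 := by
  have h1 : ∀ S : Finset (Fin d), chi S x * chi S y = ∏ i ∈ S, (sgn (x i) * sgn (y i)) := by
    intro S; rw [chi, chi, Finset.prod_mul_distrib]
  simp_rw [h1]
  have h2 : ∑ S : Finset (Fin d), ∏ i ∈ S, (sgn (x i) * sgn (y i))
      = ∏ i, (sgn (x i) * sgn (y i) + 1) := by
    rw [Finset.prod_add, ← Finset.powerset_univ]
    simp
  rw [h2]
  have hfac : ∀ i : Fin d, sgn (x i) * sgn (y i) + 1 = if x i = y i then 2 else 0 := by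
    intro i
    cases hx : x i <;> cases hy : y i <;> simp [sgn] <;> norm_num
  simp_rw [hfac]
  by_cases hxy : x = y
  · subst hxy; simp
  · have : ∃ i : Fin d, x i ≠ y i := by
      by_contra hc; push_neg at hc; exact hxy (funext hc)
    obtain ⟨i, hi⟩ := this
    rw [if_neg hxy]
    exact Finset.prod_eq_zero (Finset.mem_univ i) (by rw [if_neg hi])

theorem parseval {d : ℕ} (h : (Fin d → Bool) → ℝ) :
    ∑ S : Finset (Fin d), (fourierCoef h S) ^ 2 = hcE (fun x => h x ^ 2) := by
  have h2d : ((2 : ℝ) ^ d) ≠ 0 := by positivity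
  simp only [fourierCoef, hcE, div_pow]
  rw [← Finset.sum_div]
  rw [div_eq_div_iff (by positivity) h2d]
  have expand : ∀ S : Finset (Fin d),
      (∑ x : Fin d → Bool, h x * chi S x) ^ 2
        = ∑ x : Fin d → Bool, ∑ y : Fin d → Bool, h x * h y * (chi S x * chi S y) := by
    intro S
    rw [sq, Finset.sum_mul_sum]
    congr 1; ext x; congr 1; ext y; ring
  simp_rw [expand]
  rw [Finset.sum_comm]
  have : ∀ x : Fin d → Bool,
      ∑ S : Finset (Fin d), ∑ y : Fin d → Bool, h x * h y * (chi S x * chi S y)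
        = h x ^ 2 * 2 ^ d := by
    intro x
    rw [Finset.sum_comm]
    have : ∀ y : Fin d → Bool,
        ∑ S : Finset (Fin d), h x * h y * (chi S x * chi S y)
          = h x * h y * (if x = y then (2:ℝ)^d else 0) := by
      intro y
      rw [← Finset.mul_sum, chi_dual_ortho]
    simp_rw [this]
    rw [Finset.sum_eq_single x (fun y _ hy => by rw [if_neg (fun he => hy he.symm), mul_zero])
      (fun hx => absurd (Finset.mem_univ x) hx)]
    rw [if_pos rfl]; ring
  simp_rw [this]
  rw [← Finset.sum_mul]
  ring

theorem inversion {d : ℕ} (f : (Fin d → Bool) → ℝ) (x : Fin d → Bool) :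
    ∑ S : Finset (Fin d), fourierCoef f S * chi S x = f x := by
  have h2d : ((2 : ℝ) ^ d) ≠ 0 := by positivity
  simp only [fourierCoef, hcE]
  have : ∀ S : Finset (Fin d),
      (∑ y : Fin d → Bool, f y * chi S y) / 2 ^ d * chi S x
        = (∑ y : Fin d → Bool, f y * (chi S y * chi S x)) / 2 ^ d := by
    intro S
    rw [div_mul_eq_mul_div, Finset.sum_mul]
    congr 1
    exact Finset.sum_congr rfl fun y _ => by ring
  simp_rw [this, ← Finset.sum_div]
  rw [Finset.sum_comm]
  have : ∀ y : Fin d → Bool,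
      ∑ S : Finset (Fin d), f y * (chi S y * chi S x)
        = f y * (if y = x then (2:ℝ)^d else 0) := by
    intro y; rw [← Finset.mul_sum, chi_dual_ortho]
  simp_rw [this]
  rw [Finset.sum_eq_single x (fun y _ hy => by rw [if_neg hy, mul_zero])
    (fun hx => absurd (Finset.mem_univ x) hx), if_pos rfl]
  field_simp

theorem sgn_beq (a b : Bool) : sgn (a == b) = sgn a * sgn b := by
  cases a <;> cases b <;> simp [sgn]

theorem chi_flip {d : ℕ} (S : Finset (Fin d)) (x s : Fin d → Bool) :
    chi S (fun i => x i == s i) = chi S x * chi S s := by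
  simp only [chi, ← Finset.prod_mul_distrib]
  exact Finset.prod_congr rfl fun i _ => sgn_beq (x i) (s i)

theorem inner_expand {d : ℕ} (f h : (Fin d → Bool) → ℝ) (s : Fin d → Bool) :
    hcE (fun x => f (fun i => x i == s i) * h x)
      = ∑ S : Finset (Fin d), fourierCoef f S * chi S s * fourierCoef h S := by
  have key : ∀ x : Fin d → Bool, f (fun i => x i == s i) * h x
      = ∑ S : Finset (Fin d), fourierCoef f S * chi S s * (h x * chi S x) := by
    intro x
    conv_lhs => rw [← inversion f (fun i => x i == s i)]
    rw [Finset.sum_mul]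
    refine Finset.sum_congr rfl fun S _ => ?_
    rw [chi_flip]; ring
  simp only [hcE]
  simp_rw [key]
  rw [Finset.sum_comm, Finset.sum_div]
  refine Finset.sum_congr rfl fun S _ => ?_
  rw [← Finset.mul_sum, mul_div_assoc]
  simp only [fourierCoef, hcE]

theorem I_pow_mod4 (k : ℕ) : Complex.I ^ k = Complex.I ^ (k % 4) := by
  conv_lhs => rw [← Nat.div_add_mod k 4]
  rw [pow_add, pow_mul]
  norm_num [Complex.I_pow_four]

theorem fmod4_eq_im {d : ℕ} (x : Fin d → Bool) :
    fmod4 x = (Complex.I ^ (Finset.univ.filter fun j => x j = true).card).im := by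
  set k := (Finset.univ.filter fun j => x j = true).card with hk
  rw [I_pow_mod4]
  have h2 : k % 2 = k % 4 % 2 := (Nat.mod_mod_of_dvd k ⟨2, rfl⟩).symm
  have h4 : k % 4 = 0 ∨ k % 4 = 1 ∨ k % 4 = 2 ∨ k % 4 = 3 := by omega
  rcases h4 with h | h | h | h <;>
    rw [h] <;> simp only [fmod4, ← hk, h2, h] <;> norm_num [pow_succ, Complex.I_mul_I]

theorem fmod4_coef_sq_le {d : ℕ} (S : Finset (Fin d)) :
    (fourierCoef fmod4 S) ^ 2 ≤ ((2 : ℝ) ^ d)⁻¹ := by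
  have h2d : ((2 : ℝ) ^ d) ≠ 0 := by positivity
  set P : ℂ := ∏ i : Fin d,
      ((if i ∈ S then Complex.I - 1 else Complex.I + 1)) with hP
  -- numerator equals P.im
  have hnum : ∑ x : Fin d → Bool, fmod4 x * chi S x = P.im := by
    have hF : ∀ x : Fin d → Bool, fmod4 x * chi S x
        = ((∏ i : Fin d, ((if x i = true then Complex.I else 1)
            * ((if i ∈ S then sgn (x i) else 1 : ℝ) : ℂ)))).im := by
      intro x
      rw [Finset.prod_mul_distrib]
      have hprod1 : (∏ i : Fin d, (if x i = true then Complex.I else 1))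
          = Complex.I ^ (Finset.univ.filter fun j => x j = true).card := by
        rw [Finset.prod_ite, Finset.prod_const, Finset.prod_const_one, mul_one]
      have hprod2 : (∏ i : Fin d, ((if i ∈ S then sgn (x i) else 1 : ℝ) : ℂ))
          = ((chi S x : ℝ) : ℂ) := by
        rw [chi_eq_prod]
        push_cast
        rfl
      rw [hprod1, hprod2, Complex.mul_im, Complex.ofReal_im, Complex.ofReal_re,
        mul_zero, zero_add, fmod4_eq_im]
    simp_rw [hF]
    rw [← Complex.im_sum]
    congr 1
    rw [sum_prod_bool (fun i b => (if b = true then Complex.I else 1)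
      * ((if i ∈ S then sgn b else 1 : ℝ) : ℂ)), hP]
    refine Finset.prod_congr rfl fun i _ => ?_
    by_cases hi : i ∈ S <;> simp [hi, sgn] <;> ring
  -- normSq of P
  have hnormSq : Complex.normSq P = 2 ^ d := by
    rw [hP, map_prod]
    have : ∀ i : Fin d,
        Complex.normSq (if i ∈ S then Complex.I - 1 else Complex.I + 1) = 2 := by
      intro i
      by_cases hi : i ∈ S <;> simp [hi, Complex.normSq_apply] <;> norm_num
    simp_rw [this]
    simp
  have him : (P.im) ^ 2 ≤ 2 ^ d := by
    rw [← hnormSq, Complex.normSq_apply]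
    nlinarith [sq_nonneg P.re]
  have hco : fourierCoef fmod4 S = P.im / 2 ^ d := by
    rw [fourierCoef, hcE, hnum]
  rw [hco, div_pow]
  rw [div_le_iff₀ (by positivity)]
  calc P.im ^ 2 ≤ 2 ^ d := him
    _ = ((2:ℝ) ^ d)⁻¹ * ((2:ℝ) ^ d) ^ 2 := by
        field_simp

/-- **Example of Appendix D.1.2: the sum-mod-4 sign function has exponentially small
sign-flip alignment.** For every `h : H_d → ℝ`,
`E_{s∼H_d}[(E_{x∼H_d}[f(x ⊙ s) h(x)])²] ≤ 2^{−d} ‖h‖²`. The coordinatewise sign product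
`x ⊙ s` is implemented on Booleans by `x i == s i` (with `true ↦ +1`). -/
theorem stmt_10 {d : ℕ} (hd : 1 ≤ d) (h : (Fin d → Bool) → ℝ) :
    (∑ s : Fin d → Bool, (hcE fun x => fmod4 (fun i => x i == s i) * h x) ^ 2) / 2 ^ d
      ≤ ((2 : ℝ) ^ d)⁻¹ * hcE (fun x => h x ^ 2) := by
  have h2d : ((2 : ℝ) ^ d) ≠ 0 := by positivity
  set a : Finset (Fin d) → ℝ := fun S => fourierCoef fmod4 S * fourierCoef h S with ha
  have hinner : ∀ s : Fin d → Bool,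
      (hcE fun x => fmod4 (fun i => x i == s i) * h x) = ∑ S : Finset (Fin d), a S * chi S s := by
    intro s
    rw [inner_expand fmod4 h s]
    exact Finset.sum_congr rfl fun S _ => by rw [ha]; ring
  simp_rw [hinner]
  have hsum : ∑ s : Fin d → Bool, (∑ S : Finset (Fin d), a S * chi S s) ^ 2
      = 2 ^ d * ∑ S : Finset (Fin d), a S ^ 2 := by
    have expand : ∀ s : Fin d → Bool,
        (∑ S : Finset (Fin d), a S * chi S s) ^ 2
          = ∑ S : Finset (Fin d), ∑ T : Finset (Fin d), a S * a T * (chi S s * chi T s) := by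
      intro s
      rw [sq, Finset.sum_mul_sum]
      refine Finset.sum_congr rfl fun S _ => Finset.sum_congr rfl fun T _ => by ring
    simp_rw [expand]
    rw [Finset.sum_comm]
    have inner1 : ∀ S : Finset (Fin d),
        ∑ s : Fin d → Bool, ∑ T : Finset (Fin d), a S * a T * (chi S s * chi T s)
          = a S ^ 2 * 2 ^ d := by
      intro S
      rw [Finset.sum_comm]
      have : ∀ T : Finset (Fin d),
          ∑ s : Fin d → Bool, a S * a T * (chi S s * chi T s)
            = a S * a T * (if S = T then (2:ℝ)^d else 0) := by
        intro T
        rw [← Finset.mul_sum, chi_ortho]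
      simp_rw [this]
      rw [Finset.sum_eq_single S (fun T _ hT => by rw [if_neg (fun he => hT he.symm), mul_zero])
        (fun hS => absurd (Finset.mem_univ S) hS), if_pos rfl]
      ring
    simp_rw [inner1]
    rw [← Finset.sum_mul]
    ring
  rw [hsum, mul_div_assoc, mul_comm ((2:ℝ)^d), div_mul_cancel₀ _ h2d]
  rw [← parseval h, Finset.mul_sum]
  refine Finset.sum_le_sum fun S _ => ?_
  rw [ha]
  have h1 := fmod4_coef_sq_le S
  have h2 : (fourierCoef h S) ^ 2 ≥ 0 := sq_nonneg _
  calc (fourierCoef fmod4 S * fourierCoef h S) ^ 2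
      = (fourierCoef fmod4 S) ^ 2 * (fourierCoef h S) ^ 2 := by ring
    _ ≤ ((2:ℝ)^d)⁻¹ * (fourierCoef h S) ^ 2 := by
        exact mul_le_mul_of_nonneg_right h1 h2

end
end

section
/- Lemma (orbit-averaged correlation bound for parities under partial permutations; key estimate in the proof of Theorem 3.6). Let d ≥ 1, T ⊆ [d], S ⊆ [d], and let σ be uniform over the group of permutations of [d] that fix every element of T. Then for every β : H_d → ℝ: E_σ[ ⟨χ_S ∘ σ, β⟩²_{L²(H_d)} ] ≤ ‖β‖²_{L²(H_d)} / C(d − |T|, |S ∖ T|), where C(n,r) is the binomial coefficient and (χ_S ∘ σ)(x) = χ_S(σ(x)). -/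
open scoped BigOperators symmDiff

noncomputable section

lemma sgn_sq (b : Bool) : sgn b * sgn b = 1 := by cases b <;> simp [sgn]

lemma chi_mul_chi {d : ℕ} (A B : Finset (Fin d)) (x : Fin d → Bool) :
    chi A x * chi B x = chi (A ∆ B) x := by
  have hA : chi A x = chi (A \ B) x * chi (A ∩ B) x := by
    rw [chi, chi, chi, ← Finset.prod_union (Finset.disjoint_sdiff_inter A B),
      Finset.sdiff_union_inter]
  have hB : chi B x = chi (B \ A) x * chi (A ∩ B) x := by
    rw [chi, chi, chi, Finset.inter_comm,
      ← Finset.prod_union (Finset.disjoint_sdiff_inter B A), Finset.sdiff_union_inter]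
  have hI : chi (A ∩ B) x * chi (A ∩ B) x = 1 := by
    rw [chi, ← Finset.prod_mul_distrib]
    exact Finset.prod_eq_one fun i _ => sgn_sq (x i)
  have hU : chi (A ∆ B) x = chi (A \ B) x * chi (B \ A) x := by
    rw [chi, chi, chi, ← Finset.prod_union disjoint_sdiff_sdiff, ← Finset.sup_eq_union,
      ← symmDiff_def]
  rw [hA, hB, hU]
  calc chi (A \ B) x * chi (A ∩ B) x * (chi (B \ A) x * chi (A ∩ B) x)
      = chi (A \ B) x * chi (B \ A) x * (chi (A ∩ B) x * chi (A ∩ B) x) := by ring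
    _ = chi (A \ B) x * chi (B \ A) x := by rw [hI, mul_one]

lemma hcE_chi {d : ℕ} (C : Finset (Fin d)) : hcE (chi C) = if C = ∅ then 1 else 0 := by
  have key : ∑ x : Fin d → Bool, chi C x
      = ∏ i : Fin d, ∑ b : Bool, (if i ∈ C then sgn b else 1) := by
    rw [Finset.prod_univ_sum]
    rw [Fintype.piFinset_univ]
    apply Finset.sum_congr rfl
    intro x _
    rw [chi, ← Finset.prod_subset (Finset.subset_univ C)]
    · exact Finset.prod_congr rfl fun i hi => by simp [hi]
    · intro i _ hi; simp [hi]
  by_cases hC : C = ∅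
  · simp [hC, hcE, chi]
  · obtain ⟨i, hi⟩ := Finset.nonempty_iff_ne_empty.2 hC
    rw [hcE, key, if_neg hC]
    rw [Finset.prod_eq_zero (Finset.mem_univ i)]
    · simp
    · simp [hi, sgn]

lemma hcE_chi_mul_chi {d : ℕ} (A B : Finset (Fin d)) :
    (hcE fun x => chi A x * chi B x) = if A = B then 1 else 0 := by
  have : (fun x => chi A x * chi B x) = chi (A ∆ B) := funext fun x => chi_mul_chi A B x
  rw [this, hcE_chi]
  congr 1
  simp [symmDiff_eq_bot]

lemma hcE_add {d : ℕ} (f g : (Fin d → Bool) → ℝ) :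
    hcE (fun x => f x + g x) = hcE f + hcE g := by
  simp [hcE, Finset.sum_add_distrib, add_div]

lemma hcE_sub {d : ℕ} (f g : (Fin d → Bool) → ℝ) :
    hcE (fun x => f x - g x) = hcE f - hcE g := by
  simp [hcE, Finset.sum_sub_distrib, sub_div]

lemma hcE_const_mul {d : ℕ} (c : ℝ) (f : (Fin d → Bool) → ℝ) :
    hcE (fun x => c * f x) = c * hcE f := by
  simp [hcE, ← Finset.mul_sum, mul_div_assoc]

lemma hcE_sum {d : ℕ} {ι : Type*} (F : Finset ι) (f : ι → (Fin d → Bool) → ℝ) :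
    hcE (fun x => ∑ i ∈ F, f i x) = ∑ i ∈ F, hcE (f i) := by
  rw [hcE, Finset.sum_comm, Finset.sum_div]
  rfl

lemma hcE_nonneg {d : ℕ} {f : (Fin d → Bool) → ℝ} (h : ∀ x, 0 ≤ f x) : 0 ≤ hcE f := by
  apply div_nonneg _ (by positivity)
  exact Finset.sum_nonneg fun x _ => h x

lemma bessel {d : ℕ} (F : Finset (Finset (Fin d))) (β : (Fin d → Bool) → ℝ) :
    ∑ A ∈ F, fourierCoef β A ^ 2 ≤ hcE (fun x => β x ^ 2) := by
  set c : Finset (Fin d) → ℝ := fourierCoef β with hc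
  set g : (Fin d → Bool) → ℝ := fun x => ∑ A ∈ F, c A * chi A x with hg
  have hbg : hcE (fun x => β x * g x) = ∑ A ∈ F, c A ^ 2 := by
    have : (fun x => β x * g x) = fun x => ∑ A ∈ F, c A * (β x * chi A x) := by
      funext x; rw [hg, Finset.mul_sum]; exact Finset.sum_congr rfl fun A _ => by ring
    rw [this, hcE_sum]
    exact Finset.sum_congr rfl fun A _ => by
      rw [hcE_const_mul]; rw [hc]; rw [show (fun x => β x * chi A x) = _ from rfl]
      rw [← fourierCoef]; ring
  have hgg : hcE (fun x => g x * g x) = ∑ A ∈ F, c A ^ 2 := by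
    have : (fun x => g x * g x)
        = fun x => ∑ A ∈ F, ∑ B ∈ F, (c A * c B) * (chi A x * chi B x) := by
      funext x; rw [hg, Finset.sum_mul_sum]
      exact Finset.sum_congr rfl fun A _ => Finset.sum_congr rfl fun B _ => by ring
    rw [this, hcE_sum]
    have : ∀ A ∈ F, hcE (fun x => ∑ B ∈ F, (c A * c B) * (chi A x * chi B x)) = c A ^ 2 := by
      intro A hA
      rw [hcE_sum]
      have : ∀ B ∈ F, hcE (fun x => (c A * c B) * (chi A x * chi B x))
          = if A = B then c A ^ 2 else 0 := by
        intro B _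
        rw [hcE_const_mul, hcE_chi_mul_chi]
        by_cases h : A = B <;> simp [h]; ring
      rw [Finset.sum_congr rfl this, Finset.sum_ite_eq F A (fun _ => c A ^ 2), if_pos hA]
    exact Finset.sum_congr rfl this
  have key : 0 ≤ hcE (fun x => (β x - g x) ^ 2) := hcE_nonneg fun x => sq_nonneg _
  have expand : hcE (fun x => (β x - g x) ^ 2)
      = hcE (fun x => β x ^ 2) - ∑ A ∈ F, c A ^ 2 := by
    have : (fun x => (β x - g x) ^ 2)
        = fun x => β x ^ 2 - (2 * (β x * g x) - g x * g x) := by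
      funext x; ring
    rw [this, hcE_sub, hcE_sub, hcE_const_mul, hbg, hgg]
    ring
  linarith [key, expand ▸ key]
section Comb
variable {d : ℕ}

lemma fix_compl {T : Finset (Fin d)} {σ : Equiv.Perm (Fin d)} (hσ : ∀ i ∈ T, σ i = i)
    {i : Fin d} (hi : i ∉ T) : σ i ∉ T := by
  intro h
  have h2 : σ (σ i) = σ i := hσ _ h
  have h3 : σ i = i := σ.injective h2
  exact hi (h3 ▸ h)

lemma corr_eq_coef (S : Finset (Fin d)) (σ : Equiv.Perm (Fin d)) (β : (Fin d → Bool) → ℝ) :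
    (hcE fun x => chi S (fun i => x (σ i)) * β x) = fourierCoef β (S.image σ) := by
  rw [fourierCoef]
  congr 1; funext x
  rw [mul_comm]; congr 1
  rw [chi, chi, Finset.prod_image (fun a _ b _ h => σ.injective h)]

lemma exists_perm (S T B : Finset (Fin d)) (hB : B ⊆ Finset.univ \ T)
    (hcard : B.card = (S \ T).card) :
    ∃ σ : Equiv.Perm (Fin d), (∀ i ∈ T, σ i = i) ∧ S.image σ = (S ∩ T) ∪ B := by
  classical
  set A := S \ T with hA
  have hAT : ∀ i ∈ A, ¬ i ∈ T := fun i hi => (Finset.mem_sdiff.1 hi).2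
  have hBT : ∀ i ∈ B, ¬ i ∈ T := fun i hi => (Finset.mem_sdiff.1 (hB hi)).2
  have cardA : Fintype.card {x : {i : Fin d // ¬ i ∈ T} // ↑x ∈ A} = A.card := by
    rw [Fintype.card_congr (Equiv.subtypeSubtypeEquivSubtype (fun {x} hx => hAT x hx))]
    exact Fintype.card_coe A
  have cardB : Fintype.card {x : {i : Fin d // ¬ i ∈ T} // ↑x ∈ B} = B.card := by
    rw [Fintype.card_congr (Equiv.subtypeSubtypeEquivSubtype (fun {x} hx => hBT x hx))]
    exact Fintype.card_coe B
  set e' : {x : {i : Fin d // ¬ i ∈ T} // ↑x ∈ A} ≃ {x : {i : Fin d // ¬ i ∈ T} // ↑x ∈ B} :=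
    Fintype.equivOfCardEq (by rw [cardA, cardB, hcard]) with he'
  set τ : Equiv.Perm {i : Fin d // ¬ i ∈ T} := e'.extendSubtype with hτ
  set σ : Equiv.Perm (Fin d) :=
    Equiv.Perm.subtypeCongr (Equiv.refl {i : Fin d // i ∈ T}) τ with hσ
  have hfix : ∀ i ∈ T, σ i = i := by
    intro i hi
    rw [hσ, Equiv.Perm.subtypeCongr.left_apply _ _ hi]
    rfl
  refine ⟨σ, hfix, ?_⟩
  have hSd : S = (S ∩ T) ∪ A := by
    ext i; simp only [hA, Finset.mem_union, Finset.mem_inter, Finset.mem_sdiff]; tauto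
  have h1 : (S ∩ T).image σ = S ∩ T := by
    rw [Finset.image_congr (g := id) (fun i hi => hfix i (Finset.mem_inter.1 hi).2),
      Finset.image_id]
  have h2 : A.image σ = B := by
    apply Finset.eq_of_subset_of_card_le
    · intro j hj
      obtain ⟨i, hiA, rfl⟩ := Finset.mem_image.1 hj
      have hiT : ¬ i ∈ T := hAT i hiA
      rw [hσ, Equiv.Perm.subtypeCongr.right_apply _ _ hiT]
      exact Equiv.extendSubtype_mem e' ⟨i, hiT⟩ hiA
    · rw [Finset.card_image_of_injective _ σ.injective, hcard]
  conv_lhs => rw [hSd]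
  rw [Finset.image_union, h1, h2]

end Comb
section Main
variable {d : ℕ}

lemma inv_fix {T : Finset (Fin d)} {σ : Equiv.Perm (Fin d)} (hσ : ∀ i ∈ T, σ i = i) :
    ∀ i ∈ T, σ⁻¹ i = i := by
  intro i hi
  conv_lhs => rw [← hσ i hi]
  exact Equiv.symm_apply_apply σ i

lemma image_decomp (S T : Finset (Fin d)) (σ : Equiv.Perm (Fin d)) (hσ : ∀ i ∈ T, σ i = i) :
    S.image σ = (S ∩ T) ∪ (S \ T).image σ := by
  have hSd : S = (S ∩ T) ∪ (S \ T) := by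
    ext i; simp only [Finset.mem_union, Finset.mem_inter, Finset.mem_sdiff]; tauto
  have h1 : (S ∩ T).image σ = S ∩ T := by
    rw [Finset.image_congr (g := id) (fun i hi => hσ i (Finset.mem_inter.1 hi).2),
      Finset.image_id]
  conv_lhs => rw [hSd]
  rw [Finset.image_union, h1]

lemma image_mem_orb (S T : Finset (Fin d)) (σ : Equiv.Perm (Fin d)) (hσ : ∀ i ∈ T, σ i = i) :
    S.image σ ∈ ((Finset.univ \ T).powersetCard (S \ T).card).image
      (fun B => (S ∩ T) ∪ B) := by
  apply Finset.mem_image.2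
  refine ⟨(S \ T).image σ, ?_, (image_decomp S T σ hσ).symm⟩
  rw [Finset.mem_powersetCard]
  constructor
  · intro j hj
    obtain ⟨i, hi, rfl⟩ := Finset.mem_image.1 hj
    simp only [Finset.mem_sdiff, Finset.mem_univ, true_and]
    exact fix_compl hσ (Finset.mem_sdiff.1 hi).2
  · exact Finset.card_image_of_injective _ σ.injective

lemma orb_card (S T : Finset (Fin d)) :
    (((Finset.univ \ T).powersetCard (S \ T).card).image (fun B => (S ∩ T) ∪ B)).card
      = (d - T.card).choose ((S \ T).card) := by
  rw [Finset.card_image_of_injOn, Finset.card_powersetCard, Finset.card_sdiff_of_subset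
    (Finset.subset_univ T), Finset.card_univ, Fintype.card_fin]
  intro B1 h1 B2 h2 heq
  have key : ∀ B ∈ (Finset.univ \ T).powersetCard (S \ T).card,
      ((S ∩ T) ∪ B) \ T = B := by
    intro B hB
    have hBT : ∀ i ∈ B, i ∉ T := fun i hi =>
      (Finset.mem_sdiff.1 ((Finset.mem_powersetCard.1 hB).1 hi)).2
    ext i
    simp only [Finset.mem_sdiff, Finset.mem_union, Finset.mem_inter]
    constructor
    · rintro ⟨h | h, hT⟩
      · exact absurd h.2 hT
      · exact h
    · intro h; exact ⟨Or.inr h, hBT i h⟩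
  simp only [Finset.mem_coe] at h1 h2
  have h3 : ((S ∩ T) ∪ B1) \ T = ((S ∩ T) ∪ B2) \ T := by
    simpa using congrArg (fun X => X \ T) heq
  rwa [key B1 h1, key B2 h2] at h3
lemma image_image_inv (S : Finset (Fin d)) (σ : Equiv.Perm (Fin d)) :
    (S.image σ).image (⇑σ⁻¹) = S := by
  rw [Finset.image_image]
  have h : ⇑σ⁻¹ ∘ ⇑σ = id := by funext i; exact Equiv.symm_apply_apply σ i
  rw [h, Finset.image_id]

lemma fiber_card_eq (S T : Finset (Fin d))
    (σ₀ : Equiv.Perm (Fin d)) (h₀ : ∀ i ∈ T, σ₀ i = i) :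
    (Finset.univ.filter
      (fun σ : {σ : Equiv.Perm (Fin d) // ∀ i ∈ T, σ i = i} => S.image σ.1 = S.image σ₀)).card
    = (Finset.univ.filter
      (fun σ : {σ : Equiv.Perm (Fin d) // ∀ i ∈ T, σ i = i} => S.image σ.1 = S)).card := by
  apply Finset.card_bij' (i := fun σ _ => ⟨σ₀⁻¹ * σ.1, fun i hi => by
      simp only [Equiv.Perm.mul_apply, σ.2 i hi]; exact inv_fix h₀ i hi⟩)
    (j := fun σ _ => ⟨σ₀ * σ.1, fun i hi => by
      simp only [Equiv.Perm.mul_apply, σ.2 i hi]; exact h₀ i hi⟩)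
  case hi =>
    intro σ hσ
    simp only [Finset.mem_filter, Finset.mem_univ, true_and] at hσ ⊢
    have h1 : S.image ⇑(σ₀⁻¹ * σ.1) = (S.image ⇑σ.1).image ⇑σ₀⁻¹ := by
      rw [Equiv.Perm.coe_mul, ← Finset.image_image]
    rw [h1, hσ, image_image_inv]
  case hj =>
    intro σ hσ
    simp only [Finset.mem_filter, Finset.mem_univ, true_and] at hσ ⊢
    have h1 : S.image ⇑(σ₀ * σ.1) = (S.image ⇑σ.1).image ⇑σ₀ := by
      rw [Equiv.Perm.coe_mul, ← Finset.image_image]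
    rw [h1, hσ]
  case left_inv =>
    intro σ _
    apply Subtype.ext
    show σ₀ * (σ₀⁻¹ * σ.1) = σ.1
    group
  case right_inv =>
    intro σ _
    apply Subtype.ext
    show σ₀⁻¹ * (σ₀ * σ.1) = σ.1
    group

/-- **Orbit-averaged correlation bound for parities under partial permutations** (key
estimate in the proof of Theorem 3.6): with `σ` uniform over the permutations of `[d]`
fixing every element of `T`,
`E_σ[⟨χ_S ∘ σ, β⟩²] ≤ ‖β‖² / C(d − |T|, |S ∖ T|)`, where `(χ_S ∘ σ)(x) = χ_S(σ(x))` and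
`σ(x) = (x_{σ(1)}, …, x_{σ(d)})`. -/
theorem stmt_15 {d : ℕ} (hd : 1 ≤ d) (T S : Finset (Fin d)) (β : (Fin d → Bool) → ℝ) :
    (∑ σ : {σ : Equiv.Perm (Fin d) // ∀ i ∈ T, σ i = i},
        (hcE fun x => chi S (fun i => x (σ.1 i)) * β x) ^ 2)
      / (Fintype.card {σ : Equiv.Perm (Fin d) // ∀ i ∈ T, σ i = i} : ℝ)
    ≤ hcE (fun x => β x ^ 2) / ((d - T.card).choose ((S \ T).card) : ℝ) := by
  classical
  set f : Finset (Fin d) → ℝ := fun A => fourierCoef β A ^ 2 with hf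
  set φ : {σ : Equiv.Perm (Fin d) // ∀ i ∈ T, σ i = i} → Finset (Fin d) :=
    fun σ => S.image σ.1 with hφ
  have hre : (∑ σ : {σ : Equiv.Perm (Fin d) // ∀ i ∈ T, σ i = i},
      (hcE fun x => chi S (fun i => x (σ.1 i)) * β x) ^ 2)
      = ∑ σ : {σ : Equiv.Perm (Fin d) // ∀ i ∈ T, σ i = i}, f (φ σ) := by
    apply Finset.sum_congr rfl
    intro σ _
    rw [hφ, hf, corr_eq_coef]
  set orbF := Finset.univ.image φ with horbF
  set s := (Finset.univ.filter (fun σ : {σ : Equiv.Perm (Fin d) // ∀ i ∈ T, σ i = i} =>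
      φ σ = S)).card with hs
  have hfib : ∀ A ∈ orbF, (Finset.univ.filter (fun σ => φ σ = A)).card = s := by
    intro A hA
    obtain ⟨σ₀, _, rfl⟩ := Finset.mem_image.1 hA
    exact fiber_card_eq S T σ₀.1 σ₀.2
  have horb : orbF = ((Finset.univ \ T).powersetCard (S \ T).card).image
      (fun B => (S ∩ T) ∪ B) := by
    apply Finset.Subset.antisymm
    · intro A hA
      obtain ⟨σ₀, _, rfl⟩ := Finset.mem_image.1 hA
      exact image_mem_orb S T σ₀.1 σ₀.2
    · intro A hA
      obtain ⟨B, hB, rfl⟩ := Finset.mem_image.1 hA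
      rw [Finset.mem_powersetCard] at hB
      obtain ⟨σ, hσfix, hσim⟩ := exists_perm S T B hB.1 hB.2
      exact Finset.mem_image.2 ⟨⟨σ, hσfix⟩, Finset.mem_univ _, hσim⟩
  have hN : orbF.card = (d - T.card).choose (S \ T).card := by
    rw [horb]; exact orb_card S T
  have hs1 : 1 ≤ s := by
    rw [hs]
    apply Finset.card_pos.2
    refine ⟨⟨1, fun i _ => rfl⟩, Finset.mem_filter.2 ⟨Finset.mem_univ _, ?_⟩⟩
    simp [hφ]
  have hG : Fintype.card {σ : Equiv.Perm (Fin d) // ∀ i ∈ T, σ i = i} = s * orbF.card := by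
    rw [← Finset.card_univ, Finset.card_eq_sum_card_image φ Finset.univ,
      Finset.sum_congr rfl hfib, Finset.sum_const, smul_eq_mul, mul_comm]
  have hsum : (∑ σ : {σ : Equiv.Perm (Fin d) // ∀ i ∈ T, σ i = i}, f (φ σ))
      = (s : ℝ) * ∑ A ∈ orbF, f A := by
    rw [Finset.sum_comp f φ, Finset.mul_sum]
    apply Finset.sum_congr rfl
    intro A hA
    rw [hfib A hA, nsmul_eq_mul]
  have hB : ∑ A ∈ orbF, f A ≤ hcE (fun x => β x ^ 2) := bessel orbF β
  have hNpos : 0 < (d - T.card).choose (S \ T).card := by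
    apply Nat.choose_pos
    calc (S \ T).card ≤ (Finset.univ \ T).card :=
          Finset.card_le_card (Finset.sdiff_subset_sdiff (Finset.subset_univ S) le_rfl)
      _ = d - T.card := by
          rw [Finset.card_sdiff_of_subset (Finset.subset_univ T), Finset.card_univ, Fintype.card_fin]
  rw [hre, hsum, hG, hN, Nat.cast_mul]
  have hsne : (s : ℝ) ≠ 0 := by
    have : 0 < s := hs1
    exact_mod_cast this.ne'
  rw [mul_div_mul_left _ _ hsne]
  have hNpos' : (0:ℝ) < ((d - T.card).choose (S \ T).card : ℝ) := by exact_mod_cast hNpos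
  exact (div_le_div_iff_of_pos_right hNpos').2 hB


end Main

end
end
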